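/- Let H be a Hopf algebra over a field k with comultiplication Δ, counit ε and antipode S, and let g, h ∈ H be grouplike elements. If φ ∈ H* satisfies (id ⊗ φ)(Δ(a)) = φ(a)·g for all a ∈ H, then the linear form ψ := φ ↼ h, defined by ψ(a) = φ(ha), satisfies (id ⊗ ψ)(Δ(a)) = ψ(a)·(S(h)g) for all a ∈ H. -/
import Mathlib


open scoped TensorProduct

/-- An element `g` of a Hopf algebra is grouplike if `Δ(g) = g ⊗ g` and `ε(g) = 1`. -/
def IsGrouplike (k H : Type) [Field k] [Ring H] [HopfAlgebra k H] (g : H) : Prop :=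
  Coalgebra.comul (R := k) g = g ⊗ₜ[k] g ∧ Coalgebra.counit (R := k) g = 1

/-- The map `H ⊗ H → H`, `x ⊗ y ↦ φ(y) • x`, i.e. `(id ⊗ φ)` followed by `H ⊗ k ≅ H`. -/
noncomputable def idTens (k H : Type) [Field k] [Ring H] [Algebra k H]
    (φ : H →ₗ[k] k) : H ⊗[k] H →ₗ[k] H :=
  (TensorProduct.rid k H).toLinearMap ∘ₗ (LinearMap.lTensor H φ)

lemma antipode_mul_self (k H : Type) [Field k] [Ring H] [HopfAlgebra k H]
    (h : H) (hh : IsGrouplike k H h) :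
    HopfAlgebra.antipode (R := k) h * h = 1 := by
  have := HopfAlgebra.mul_antipode_rTensor_comul_apply (R := k) h
  rw [hh.1, hh.2] at this
  simpa using this

theorem stmt4 (k H : Type) [Field k] [Ring H] [HopfAlgebra k H]
    (g h : H) (hg : IsGrouplike k H g) (hh : IsGrouplike k H h)
    (φ : H →ₗ[k] k)
    (hφ : ∀ a : H, idTens k H φ (Coalgebra.comul (R := k) a) = φ a • g) :
    ∀ a : H,
      idTens k H (φ ∘ₗ LinearMap.mulLeft k h) (Coalgebra.comul (R := k) a)
        = (φ ∘ₗ LinearMap.mulLeft k h) a • (HopfAlgebra.antipode (R := k) h * g) := by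
  intro a
  have key : ∀ x : H ⊗[k] H,
      idTens k H φ ((h ⊗ₜ[k] h) * x) = h * idTens k H (φ ∘ₗ LinearMap.mulLeft k h) x := by
    intro x
    induction x using TensorProduct.induction_on with
    | zero => simp
    | tmul x y =>
        simp [idTens, Algebra.TensorProduct.tmul_mul_tmul, mul_smul_comm]
    | add x y hx hy => simp [mul_add, hx, hy]
  have h1 : h * idTens k H (φ ∘ₗ LinearMap.mulLeft k h) (Coalgebra.comul (R := k) a)
      = φ (h * a) • g := by
    rw [← key, ← hh.1, ← Bialgebra.comul_mul]
    simpa using hφ (h * a)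
  have h2 := congrArg (fun x => HopfAlgebra.antipode (R := k) h * x) h1
  simp only [← mul_assoc, antipode_mul_self k H h hh, one_mul, mul_smul_comm] at h2
  simpa using h2
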